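/- arXiv:1912.09195 — 4 statements merged into one kernel-verified Lean document; each statement's English description precedes it below -/
import Mathlib

section
/- Let V, W be finite-dimensional real vector spaces and h : V × V → W a symmetric bilinear map such that for every u ∈ V the image {h(u,v) : v ∈ V} is contained in some 1-dimensional subspace of W (depending on u). Then the span of the full image {h(u,v) : u,v ∈ V} has dimension at most 1. -/
open Submodule

/-- Helper: in a 1-dimensional subspace, any element lies in the span of any
nonzero element. -/
lemma mem_span_of_mem_rank_one {W : Type*} [AddCommGroup W] [Module ℝ W] [FiniteDimensional ℝ W]
    (L : Submodule ℝ W) (hL : Module.finrank ℝ L = 1)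
    {x y : W} (hx : x ∈ L) (hy : y ∈ L) (hx0 : x ≠ 0) :
    y ∈ span ℝ ({x} : Set W) := by
  have hle : span ℝ ({x} : Set W) ≤ L := by
    rw [span_le, Set.singleton_subset_iff]; exact hx
  have heq : span ℝ ({x} : Set W) = L := by
    apply Submodule.eq_of_le_of_finrank_le hle
    rw [finrank_span_singleton hx0, hL]
  rw [heq]; exact hy

/-- Let `V`, `W` be finite-dimensional real vector spaces and `h : V × V → W` a symmetric
bilinear map such that for every `u ∈ V` the image `{h u v : v ∈ V}` is contained in some
1-dimensional subspace of `W` (depending on `u`).  Then the span of the full image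
`{h u v : u, v ∈ V}` has dimension at most 1. -/
theorem bilinear_slices_rank_one_implies_rank_one
    {V W : Type*} [AddCommGroup V] [Module ℝ V] [FiniteDimensional ℝ V]
    [AddCommGroup W] [Module ℝ W] [FiniteDimensional ℝ W]
    (h : V →ₗ[ℝ] V →ₗ[ℝ] W)
    (hsymm : ∀ u v : V, h u v = h v u)
    (hslice : ∀ u : V, ∃ L : Submodule ℝ W, Module.finrank ℝ L = 1 ∧
      ∀ v : V, h u v ∈ L) :
    Module.finrank ℝ (span ℝ {w : W | ∃ u v : V, h u v = w}) ≤ 1 := by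
  by_cases hz : ∀ u v : V, h u v = 0
  · have hle : span ℝ {w : W | ∃ u v : V, h u v = w} ≤ ⊥ := by
      rw [span_le]
      rintro w ⟨u, v, rfl⟩
      simp [hz u v]
    have hb : span ℝ {w : W | ∃ u v : V, h u v = w} = ⊥ := le_bot_iff.mp hle
    rw [hb]
    simp
  · push_neg at hz
    obtain ⟨u0, v0, hw0⟩ := hz
    set w0 : W := h u0 v0 with hw0def
    set L : Submodule ℝ W := span ℝ ({w0} : Set W) with hLdef
    -- if some value of a slice is nonzero and lies in L, the whole slice lies in L
    have slice_in : ∀ a b : V, h a b ≠ 0 → h a b ∈ L → ∀ c : V, h a c ∈ L := by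
      intro a b hab habL c
      obtain ⟨K, hK1, hKmem⟩ := hslice a
      have : h a c ∈ span ℝ ({h a b} : Set W) :=
        mem_span_of_mem_rank_one K hK1 (hKmem b) (hKmem c) hab
      have hsub : span ℝ ({h a b} : Set W) ≤ L := by
        rw [span_le, Set.singleton_subset_iff]; exact habL
      exact hsub this
    have hA : ∀ c : V, h u0 c ∈ L := by
      intro c
      exact slice_in u0 v0 hw0 (subset_span rfl) c
    have hB : ∀ c : V, h v0 c ∈ L := by
      intro c
      have hne : h v0 u0 ≠ 0 := by rw [← hsymm]; exact hw0
      have hmem : h v0 u0 ∈ L := by rw [← hsymm]; exact subset_span rfl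
      exact slice_in v0 u0 hne hmem c
    have main : ∀ u v : V, h u v ∈ L := by
      intro u v
      by_cases hu : h u u0 = 0
      · by_cases hv : h v u0 = 0
        · -- both pair with u0 trivially; use u0 + t•u trick with t = ±1
          have huv0 : h u v0 ∈ L := by rw [hsymm]; exact hB u
          have key : ∀ t : ℝ, t ≠ 0 → w0 + t • h u v0 ≠ 0 → h u v ∈ L := by
            intro t ht hne
            have hval : h (u0 + t • u) v0 = w0 + t • h u v0 := by
              simp [map_add, map_smul, hw0def]
            have hmemL : h (u0 + t • u) v0 ∈ L := by
              rw [hval]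
              exact L.add_mem (subset_span rfl) (L.smul_mem t huv0)
            have hne' : h (u0 + t • u) v0 ≠ 0 := by rw [hval]; exact hne
            have hall := slice_in (u0 + t • u) v0 hne' hmemL v
            have hval2 : h (u0 + t • u) v = h u0 v + t • h u v := by
              simp [map_add, map_smul]
            rw [hval2] at hall
            have : t • h u v ∈ L := by
              have := L.sub_mem hall (hA v)
              simpa using this
            rwa [L.smul_mem_iff ht] at this
          by_cases hc : w0 + h u v0 = 0
          · apply key (-1) (by norm_num)
            intro hcon
            apply hw0
            have heq : w0 = h u v0 := by
              have h2 : w0 - h u v0 = 0 := by simpa [sub_eq_add_neg] using hcon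
              exact sub_eq_zero.mp h2
            have hsum : w0 + w0 = 0 := by rw [heq] at hc ⊢; exact hc
            have h2s : (2 : ℝ) • w0 = 0 := by rw [two_smul]; exact hsum
            rcases smul_eq_zero.mp h2s with h' | h'
            · norm_num at h'
            · exact h'
          · exact key 1 one_ne_zero (by simpa using hc)
        · -- slice at v contains nonzero h v u0 ∈ L
          have hmem : h v u0 ∈ L := by rw [hsymm]; exact hA v
          have := slice_in v u0 hv hmem u
          rwa [hsymm] 
      · -- slice at u contains nonzero h u u0 ∈ L
        have hmem : h u u0 ∈ L := by rw [hsymm]; exact hA u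
        exact slice_in u u0 hu hmem v
    have hle : span ℝ {w : W | ∃ u v : V, h u v = w} ≤ L := by
      rw [span_le]
      rintro w ⟨u, v, rfl⟩
      exact main u v
    calc Module.finrank ℝ (span ℝ {w : W | ∃ u v : V, h u v = w})
        ≤ Module.finrank ℝ L := Submodule.finrank_mono hle
      _ = 1 := finrank_span_singleton hw0
end

section
/- Let V, W be finite-dimensional real vector spaces and h : V × V → W a symmetric bilinear map whose image spans a subspace of dimension exactly 2, with dim V ≥ 2. Then there exists an open dense subset U ⊂ V such that for every u ∈ U, the linear map v ↦ h(u,v) is onto the span of the image of h. -/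
/-!
If every slice `h u` had rank at most one, symmetry would force the whole image of `h` into a
line: for `h a b ≠ 0`, each `h u` with `h u b ≠ 0` has range `ℝ ∙ h u b = ℝ ∙ h b u ⊆ ℝ ∙ h a b`,
and the remaining `u` are handled through `u + a`. So some slice `h u₀` hits two independent
vectors `h u₀ x, h u₀ y`. In coordinates dual to them, the determinant of `(h u x, h u y)` is a
polynomial in `u` equal to `1` at `u₀`; its nonvanishing locus is open, dense by the identity
principle, and on it `h u` spans the whole two-dimensional image.
-/

open Submodule Set

section Slices

variable {K V W : Type*} [Field K] [AddCommGroup V] [Module K V] [AddCommGroup W] [Module K W]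

lemma exists_span_image_le_span_singleton {h : V →ₗ[K] V →ₗ[K] W}
    (hsymm : ∀ u v, h u v = h v u)
    (hdep : ∀ u x y, ¬LinearIndependent K ![h u x, h u y]) :
    ∃ w : W, span K {w | ∃ u v, h u v = w} ≤ K ∙ w := by
  have mem_of_ne : ∀ u x y, h u x ≠ 0 → h u y ∈ K ∙ h u x := fun u x y hx => by
    have := hdep u x y
    rw [LinearIndependent.pair_iff' hx] at this
    push Not at this
    obtain ⟨c, hc⟩ := this
    exact mem_span_singleton.mpr ⟨c, hc⟩
  by_cases hzero : ∀ a b, h a b = 0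
  · refine ⟨0, span_le.mpr ?_⟩
    rintro _ ⟨u, v, rfl⟩
    simp [hzero]
  push Not at hzero
  obtain ⟨a, b, hab⟩ := hzero
  have hba : h b a ≠ 0 := hsymm a b ▸ hab
  have slice_le : ∀ u, h u b ≠ 0 → ∀ y, h u y ∈ K ∙ h a b := fun u hu y => by
    have hub : h u b ∈ K ∙ h a b := by
      simpa only [hsymm b] using mem_of_ne b a u hba
    exact (span_singleton_le_iff_mem _ _).mpr hub (mem_of_ne u b y hu)
  refine ⟨h a b, span_le.mpr ?_⟩
  rintro _ ⟨u, y, rfl⟩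
  by_cases hu : h u b = 0
  · have hua : h (u + a) b ≠ 0 := by simpa [hu] using hab
    simpa using sub_mem (slice_le _ hua y) (slice_le a hab y)
  · exact slice_le u hu y

lemma exists_linearIndependent_slice {h : V →ₗ[K] V →ₗ[K] W}
    (hsymm : ∀ u v, h u v = h v u)
    (hrank : 1 < Module.finrank K (span K {w | ∃ u v, h u v = w})) :
    ∃ u x y, LinearIndependent K ![h u x, h u y] := by
  by_contra! hdep
  obtain ⟨w, hw⟩ := exists_span_image_le_span_singleton hsymm hdep
  have := (Submodule.finrank_mono hw).trans (finrank_span_le_card ({w} : Set W))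
  simp only [toFinset_singleton, Finset.card_singleton] at this
  omega

lemma range_eq_span_image_of_linearIndependent {h : V →ₗ[K] V →ₗ[K] W}
    (hrank : Module.finrank K (span K {w | ∃ u v, h u v = w}) = 2) {u x y : V}
    (hli : LinearIndependent K ![h u x, h u y]) :
    LinearMap.range (h u) = span K {w | ∃ u v, h u v = w} := by
  set S := span K {w | ∃ u v, h u v = w}
  have : FiniteDimensional K S := Module.finite_of_finrank_eq_succ hrank
  have hpair_le : span K (range ![h u x, h u y]) ≤ S := span_le.mpr <| by
    rintro _ ⟨i, rfl⟩
    fin_cases i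
    exacts [subset_span ⟨u, x, rfl⟩, subset_span ⟨u, y, rfl⟩]
  have hpair : span K (range ![h u x, h u y]) = S :=
    eq_of_le_of_finrank_eq hpair_le <| by simp [finrank_span_eq_card hli, hrank]
  refine le_antisymm ?_ (hpair ▸ span_le.mpr ?_)
  · rintro _ ⟨v, rfl⟩
    exact subset_span ⟨u, v, rfl⟩
  · rintro _ ⟨i, rfl⟩
    fin_cases i
    exacts [⟨x, rfl⟩, ⟨y, rfl⟩]

end Slices

section Determinant

variable {K W : Type*} [Field K] [AddCommGroup W] [Module K W] {ι : Type*} [Fintype ι] [DecidableEq ι]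

lemma LinearIndependent.exists_linearMap_apply_eq_single {w : ι → W} (hw : LinearIndependent K w) :
    ∃ g : W →ₗ[K] ι → K, ∀ i, g (w i) = Pi.single i 1 := by
  obtain ⟨g, hg⟩ := (Fintype.linearCombination K w).exists_leftInverse_of_injective
    (LinearMap.ker_eq_bot.mpr (linearIndependent_iff_injective_fintypeLinearCombination.mp hw))
  refine ⟨g, fun i => ?_⟩
  simpa using LinearMap.congr_fun hg (Pi.single i 1)

lemma LinearIndependent.of_det_ne_zero {w : ι → W} (g : W →ₗ[K] ι → K)
    (hdet : (Matrix.of (g ∘ w)).det ≠ 0) : LinearIndependent K w :=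
  (Matrix.linearIndependent_rows_of_det_ne_zero hdet).of_comp g

end Determinant

section Analytic

variable {𝕜 E : Type*} [NontriviallyNormedField 𝕜] [NormedAddCommGroup E] [NormedSpace 𝕜 E]

theorem AnalyticOnNhd.matrix_det {n : Type*} [Fintype n] [DecidableEq n] {s : Set E}
    {A : E → Matrix n n 𝕜} (hA : ∀ i j, AnalyticOnNhd 𝕜 (fun x => A x i j) s) :
    AnalyticOnNhd 𝕜 (fun x => (A x).det) s := by
  simp only [Matrix.det_apply']
  exact Finset.analyticOnNhd_fun_sum _ fun σ _ =>
    analyticOnNhd_const.mul (Finset.analyticOnNhd_fun_prod _ fun i _ => hA (σ i) i)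

theorem AnalyticOnNhd.dense_setOf_ne_zero {F : Type*} [NormedAddCommGroup F] [NormedSpace 𝕜 F]
    [PreconnectedSpace E] {f : E → F} (hf : AnalyticOnNhd 𝕜 f univ) (hne : f ≠ 0) :
    Dense {x | f x ≠ 0} := by
  refine dense_iff_inter_open.mpr fun U hU ⟨z, hz⟩ => ?_
  by_contra! hempty
  refine hne (hf.eq_of_eventuallyEq analyticOnNhd_const (z₀ := z) ?_)
  filter_upwards [hU.mem_nhds hz] with x hx
  by_contra hfx
  exact hempty.subset ⟨hx, hfx⟩

end Analytic

theorem rank_two_bilinear_slice_generic_general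
    {V W : Type*} [NormedAddCommGroup V] [NormedSpace ℝ V] [FiniteDimensional ℝ V]
    [AddCommGroup W] [Module ℝ W]
    (h : V →ₗ[ℝ] V →ₗ[ℝ] W)
    (hsymm : ∀ u v : V, h u v = h v u)
    (hrank : Module.finrank ℝ (span ℝ {w : W | ∃ u v : V, h u v = w}) = 2) :
    ∃ U : Set V, IsOpen U ∧ Dense U ∧
      ∀ u ∈ U, LinearMap.range (h u) = span ℝ {w : W | ∃ u' v : V, h u' v = w} := by
  obtain ⟨u₀, x, y, hli⟩ := exists_linearIndependent_slice hsymm (by omega)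
  obtain ⟨g, hg⟩ := hli.exists_linearMap_apply_eq_single
  let D : V → ℝ := fun u => (Matrix.of (g ∘ ![h u x, h u y])).det
  have hD : AnalyticOnNhd ℝ D univ := by
    have entry : ∀ z j, AnalyticOnNhd ℝ (fun u => g (h u z) j) univ := fun z j =>
      (LinearMap.proj j ∘ₗ g ∘ₗ h.flip z).toContinuousLinearMap.analyticOnNhd univ
    exact AnalyticOnNhd.matrix_det fun i j => by fin_cases i <;> exact entry _ j
  have hD₀ : D u₀ = 1 := by
    have : Matrix.of (g ∘ ![h u₀ x, h u₀ y]) = 1 := by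
      ext i j
      simp [hg, Matrix.one_apply, Pi.single_apply, eq_comm]
    simp [D, this]
  have : PathConnectedSpace V := IsTopologicalAddGroup.pathConnectedSpace
  refine ⟨{u | D u ≠ 0}, isOpen_ne_fun hD.continuous continuous_const,
    hD.dense_setOf_ne_zero fun hD0 => by simp [hD0] at hD₀, fun u hu => ?_⟩
  exact range_eq_span_image_of_linearIndependent hrank (LinearIndependent.of_det_ne_zero g hu)

/-- Let `V`, `W` be finite-dimensional real vector spaces (with `V` topologized as a
finite-dimensional normed space) and `h : V × V → W` a symmetric bilinear map whose image
spans a subspace of dimension exactly 2, with `dim V ≥ 2`.  Then there is an open dense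
subset `U ⊆ V` such that for every `u ∈ U` the linear map `v ↦ h u v` is onto the span of
the image of `h`. -/
theorem rank_two_bilinear_slice_generic
    {V W : Type*} [NormedAddCommGroup V] [NormedSpace ℝ V] [FiniteDimensional ℝ V]
    [AddCommGroup W] [Module ℝ W] [FiniteDimensional ℝ W]
    (h : V →ₗ[ℝ] V →ₗ[ℝ] W)
    (hsymm : ∀ u v : V, h u v = h v u)
    (hdimV : 2 ≤ Module.finrank ℝ V)
    (hrank : Module.finrank ℝ (span ℝ {w : W | ∃ u v : V, h u v = w}) = 2) :
    ∃ U : Set V, IsOpen U ∧ Dense U ∧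
      ∀ u ∈ U, LinearMap.range (h u) = span ℝ {w : W | ∃ u' v : V, h u' v = w} :=
  rank_two_bilinear_slice_generic_general h hsymm hrank
end

section
/- Let M ⊂ ℝ^n be a smooth embedded submanifold with induced Riemannian metric, let p ∈ M, u ∈ T_pM a unit vector, and θ : SM → S^{n-1} the tautological map θ(x,v) = v on the unit sphere bundle. Then the image of the differential d_{(p,u)}θ equals the direct sum of T_u(θ(S_pM)) and the image of the linear map v ↦ h_p(u,v), where h_p is the second fundamental form of M at p. -/
open scoped RealInnerProductSpace

set_option maxHeartbeats 1000000 in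
private lemma keyDeriv_aux {m n : ℕ}
    (ψ : EuclideanSpace ℝ (Fin m) → EuclideanSpace ℝ (Fin n))
    (hψ : ContDiff ℝ (⊤ : ℕ∞) ψ)
    {x β : ℝ → EuclideanSpace ℝ (Fin m)} {z c : EuclideanSpace ℝ (Fin m)}
    (hx0 : x 0 = 0) (hx : HasDerivAt x z 0) (hβ : HasDerivAt β c 0) :
    HasDerivAt (fun t => fderiv ℝ ψ (x t) (β t))
      (fderiv ℝ (fderiv ℝ ψ) 0 z (β 0) + fderiv ℝ ψ 0 c) 0 := by
  have hL : ContDiff ℝ (⊤ : ℕ∞) (fderiv ℝ ψ) := hψ.fderiv_right (by simp)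
  have hLd : HasFDerivAt (fderiv ℝ ψ) (fderiv ℝ (fderiv ℝ ψ) 0) (x 0) := by
    rw [hx0]; exact (hL.differentiable (by simp) 0).hasFDerivAt
  have h1 : HasDerivAt (fun t => fderiv ℝ ψ (x t)) (fderiv ℝ (fderiv ℝ ψ) 0 z) 0 :=
    hLd.comp_hasDerivAt 0 hx
  have h2 := h1.clm_apply hβ
  rwa [hx0] at h2

set_option maxHeartbeats 1000000 in
/-- Let `M ⊂ ℝ^n` be a smooth embedded `m`-dimensional submanifold, presented locally by a
smooth immersion `ψ : ℝ^m → ℝ^n` with `ψ 0 = p` and injective differential `dψ₀` at `0`,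
so that `T_pM = range dψ₀` and the second fundamental form is
`h_p(dψ₀ a, dψ₀ z) = P^⊥(D²ψ₀(a,z))`, where `P^⊥` is the orthogonal projection onto
`(T_pM)^⊥`.  Let `u ∈ T_pM` be a unit vector, `u = dψ₀ a`.  The image of the differential
at `(p,u)` of the tautological map `θ : SM → S^{n-1}`, `θ(x,v) = v` — i.e. the set of
velocities at `0` of the `S^{n-1}`-components of smooth curves in the unit sphere bundle
`SM` through `(p,u)` — equals the direct sum of `T_u θ(S_pM) = {w ∈ T_pM : ⟨w,u⟩ = 0}`
and the image of the linear map `v ↦ h_p(u,v)`. -/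
theorem image_tautological_differential_eq
    {m n : ℕ}
    (ψ : EuclideanSpace ℝ (Fin m) → EuclideanSpace ℝ (Fin n))
    (hψ : ContDiff ℝ (⊤ : ℕ∞) ψ)
    (hinj : Function.Injective (fderiv ℝ ψ 0))
    (u : EuclideanSpace ℝ (Fin n)) (hu : ‖u‖ = 1)
    (a : EuclideanSpace ℝ (Fin m)) (ha : fderiv ℝ ψ 0 a = u) :
    {w : EuclideanSpace ℝ (Fin n) |
        ∃ x b : ℝ → EuclideanSpace ℝ (Fin m), ContDiff ℝ (⊤ : ℕ∞) x ∧ ContDiff ℝ (⊤ : ℕ∞) b ∧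
          x 0 = 0 ∧ (∀ t : ℝ, ‖fderiv ℝ ψ (x t) (b t)‖ = 1) ∧
          fderiv ℝ ψ 0 (b 0) = u ∧
          w = deriv (fun t : ℝ => fderiv ℝ ψ (x t) (b t)) 0}
      = {w : EuclideanSpace ℝ (Fin n) |
          ∃ (w₁ : EuclideanSpace ℝ (Fin n)) (z : EuclideanSpace ℝ (Fin m)),
            w₁ ∈ LinearMap.range
              (fderiv ℝ ψ 0 : EuclideanSpace ℝ (Fin m) →ₗ[ℝ] EuclideanSpace ℝ (Fin n)) ∧ ⟪w₁, u⟫ = 0 ∧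
            w = w₁ + (Submodule.orthogonalProjectionOnto (LinearMap.range
              (fderiv ℝ ψ 0 : EuclideanSpace ℝ (Fin m) →ₗ[ℝ] EuclideanSpace ℝ (Fin n)))ᗮ
              (iteratedFDeriv ℝ 2 ψ 0 ![a, z]) : EuclideanSpace ℝ (Fin n))} ∧
      ∀ w : EuclideanSpace ℝ (Fin n), w ∈ LinearMap.range
          (fderiv ℝ ψ 0 : EuclideanSpace ℝ (Fin m) →ₗ[ℝ] EuclideanSpace ℝ (Fin n)) →
        (∃ z, w = (Submodule.orthogonalProjectionOnto (LinearMap.range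
          (fderiv ℝ ψ 0 : EuclideanSpace ℝ (Fin m) →ₗ[ℝ] EuclideanSpace ℝ (Fin n)))ᗮ
          (iteratedFDeriv ℝ 2 ψ 0 ![a, z]) : EuclideanSpace ℝ (Fin n))) → w = 0 := by
  set T : Submodule ℝ (EuclideanSpace ℝ (Fin n)) := LinearMap.range
    (fderiv ℝ ψ 0 : EuclideanSpace ℝ (Fin m) →ₗ[ℝ] EuclideanSpace ℝ (Fin n)) with hT
  set D2 := fderiv ℝ (fderiv ℝ ψ) 0 with hD2
  have huT : u ∈ T := LinearMap.mem_range.mpr ⟨a, ha⟩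
  have hsymm : ∀ v w, D2 v w = D2 w v := fun v w =>
    second_derivative_symmetric (f := ψ)
      (fun y => ((hψ.differentiable (by simp)) y).hasFDerivAt)
      (((hψ.fderiv_right (m := (⊤ : ℕ∞)) (by simp)).differentiable (by simp) 0).hasFDerivAt) v w
  have hiter : ∀ z, iteratedFDeriv ℝ 2 ψ 0 ![a, z] = D2 a z := fun z => by
    rw [iteratedFDeriv_two_apply]; simp [hD2]
  have hperp : ∀ y : EuclideanSpace ℝ (Fin n),
      ⟪(Submodule.orthogonalProjectionOnto Tᗮ y : EuclideanSpace ℝ (Fin n)), u⟫ = 0 := fun y =>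
    Submodule.inner_left_of_mem_orthogonal huT (SetLike.coe_mem _)
  have hdec : ∀ y : EuclideanSpace ℝ (Fin n),
      (Submodule.orthogonalProjectionOnto T y : EuclideanSpace ℝ (Fin n)) +
        (Submodule.orthogonalProjectionOnto Tᗮ y : EuclideanSpace ℝ (Fin n)) = y := fun y =>
    T.starProjection_add_starProjection_orthogonal y
  constructor
  · ext w
    simp only [Set.mem_setOf_eq]
    constructor
    · -- forward inclusion
      rintro ⟨x, b, hx, hb, hx0, hnorm, hb0, hw⟩
      have hb0a : b 0 = a := hinj (by rw [hb0, ha])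
      have hxd : HasDerivAt x (deriv x 0) 0 := (hx.differentiable (by simp) 0).hasDerivAt
      have hbd : HasDerivAt b (deriv b 0) 0 := (hb.differentiable (by simp) 0).hasDerivAt
      have hf := keyDeriv_aux ψ hψ hx0 hxd hbd
      set z := deriv x 0 with hzdef
      set v₀ := D2 z (b 0) + fderiv ℝ ψ 0 (deriv b 0) with hv₀
      have hwv : w = v₀ := by rw [hw, hf.deriv]
      have hq := hf.inner (𝕜 := ℝ) hf
      rw [hx0, hb0] at hq
      have hqc : (fun t : ℝ => ⟪fderiv ℝ ψ (x t) (b t), fderiv ℝ ψ (x t) (b t)⟫) =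
          fun _ : ℝ => (1 : ℝ) := funext fun t => by
        rw [real_inner_self_eq_norm_sq, hnorm t]; norm_num
      rw [hqc] at hq
      have h0 := hq.unique (hasDerivAt_const 0 1)
      have hvu : ⟪v₀, u⟫ = 0 := by have := real_inner_comm u v₀; linarith
      refine ⟨w - (Submodule.orthogonalProjectionOnto Tᗮ (iteratedFDeriv ℝ 2 ψ 0 ![a, z]) :
        EuclideanSpace ℝ (Fin n)), z, ?_, ?_, by abel⟩
      · rw [hiter z]
        have heq : w - (Submodule.orthogonalProjectionOnto Tᗮ (D2 a z) : EuclideanSpace ℝ (Fin n)) =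
            (Submodule.orthogonalProjectionOnto T (D2 a z) : EuclideanSpace ℝ (Fin n)) +
              fderiv ℝ ψ 0 (deriv b 0) := by
          rw [hwv, hv₀, hb0a, hsymm z a]
          nth_rewrite 1 [← hdec (D2 a z)]
          abel
        rw [heq]
        exact T.add_mem (SetLike.coe_mem _) (LinearMap.mem_range.mpr ⟨deriv b 0, rfl⟩)
      · rw [inner_sub_left, hiter z, hperp, hwv, hvu, sub_zero]
    · -- reverse inclusion
      rintro ⟨w₁, z, hw₁T, hw₁u, hwdef⟩
      replace hw₁T : w₁ ∈ T := hw₁T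
      replace hwdef : w = w₁ + (Submodule.orthogonalProjectionOnto Tᗮ
          (iteratedFDeriv ℝ 2 ψ 0 ![a, z]) : EuclideanSpace ℝ (Fin n)) := hwdef
      rw [hiter z] at hwdef
      obtain ⟨c, hc⟩ := LinearMap.mem_range.mp
        (T.sub_mem hw₁T (SetLike.coe_mem (Submodule.orthogonalProjectionOnto T (D2 a z))))
      set G : ℝ → ℝ := fun s => ‖fderiv ℝ ψ (s • z) (a + s • c)‖ with hGdef
      have hGc : Continuous G := by
        have hL : ContDiff ℝ (⊤ : ℕ∞) (fderiv ℝ ψ) := hψ.fderiv_right (by simp)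
        have hLc : Continuous (fderiv ℝ ψ) := hL.continuous
        exact ((hLc.comp (continuous_id.smul continuous_const)).clm_apply
          (continuous_const.add (continuous_id.smul continuous_const))).norm
      have hG0 : G 0 = 1 := by simp [hGdef, ha, hu]
      obtain ⟨δ, hδpos, hδ⟩ := Metric.continuousAt_iff.mp (hGc.continuousAt (x := (0:ℝ)))
        (1/2) (by norm_num)
      set φ : ℝ → ℝ := fun t => δ^2 * t / (δ^2 + t^2) with hφdef
      have hden : ∀ t : ℝ, δ^2 + t^2 ≠ 0 := fun t => by positivity
      have hφs : ContDiff ℝ (⊤ : ℕ∞) φ := ContDiff.div (by fun_prop) (by fun_prop) hden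
      have hφ0 : φ 0 = 0 := by simp [hφdef]
      have hφ' : HasDerivAt φ 1 0 := by
        have h1 : HasDerivAt (fun t : ℝ => δ^2 * t) (δ^2) 0 := by
          simpa using (hasDerivAt_id (0:ℝ)).const_mul (δ^2)
        have h2 : HasDerivAt (fun t : ℝ => δ^2 + t^2) 0 0 := by
          simpa using ((hasDerivAt_pow 2 (0:ℝ)).const_add (δ^2))
        have h3 : HasDerivAt φ _ 0 := h1.div h2 (hden 0)
        convert h3 using 1
        have : δ ≠ 0 := ne_of_gt hδpos
        field_simp
        ring
      have hφlt : ∀ t, |φ t| < δ := fun t => by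
        rw [hφdef, abs_div, abs_of_pos (by positivity : (0:ℝ) < δ^2 + t^2),
          div_lt_iff₀ (by positivity), abs_mul, abs_of_pos (by positivity : (0:ℝ) < δ^2)]
        rcases eq_or_lt_of_le (abs_nonneg t) with h | h
        · have ht : t = 0 := abs_eq_zero.mp h.symm
          subst ht
          simp only [abs_zero, mul_zero]
          positivity
        · nlinarith [sq_nonneg (δ - |t|), sq_abs t, mul_pos hδpos h, hδpos,
            mul_pos (mul_pos hδpos hδpos) h]
      have hGφ : ∀ t, 1/2 < G (φ t) := fun t => by
        have h := hδ (show dist (φ t) (0:ℝ) < δ by simpa [Real.dist_eq] using hφlt t)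
        rw [hG0, Real.dist_eq] at h
        have := abs_lt.mp h
        linarith [this.1]
      set x : ℝ → EuclideanSpace ℝ (Fin m) := fun t => φ t • z with hxdef
      set β : ℝ → EuclideanSpace ℝ (Fin m) := fun t => a + φ t • c with hβdef
      set g : ℝ → EuclideanSpace ℝ (Fin n) := fun t => fderiv ℝ ψ (x t) (β t) with hgdef
      set ρ : ℝ → ℝ := fun t => ‖g t‖ with hρdef
      have hρG : ∀ t, ρ t = G (φ t) := fun t => rfl
      have hρpos : ∀ t, 0 < ρ t := fun t => lt_trans (by norm_num) (hρG t ▸ hGφ t)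
      have hgne : ∀ t, g t ≠ 0 := fun t => by
        have := hρpos t; rw [hρdef] at this; exact norm_pos_iff.mp this
      set b : ℝ → EuclideanSpace ℝ (Fin m) := fun t => (ρ t)⁻¹ • β t with hbdef
      have hxs : ContDiff ℝ (⊤ : ℕ∞) x := hφs.smul contDiff_const
      have hβs : ContDiff ℝ (⊤ : ℕ∞) β := contDiff_const.add (hφs.smul contDiff_const)
      have hgs : ContDiff ℝ (⊤ : ℕ∞) g := ((hψ.fderiv_right (by simp)).comp hxs).clm_apply hβs
      have hρs : ContDiff ℝ (⊤ : ℕ∞) ρ := hgs.norm (𝕜 := ℝ) hgne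
      have hbs : ContDiff ℝ (⊤ : ℕ∞) b := (hρs.inv fun t => ne_of_gt (hρpos t)).smul hβs
      have hx0 : x 0 = 0 := by simp [hxdef, hφ0]
      have hβ0 : β 0 = a := by simp [hβdef, hφ0]
      have hg0 : g 0 = u := by rw [hgdef]; simp only [hx0, hβ0]; exact ha
      have hρ0 : ρ 0 = 1 := by rw [hρdef]; simp only [hg0]; exact hu
      have hfb : ∀ t, fderiv ℝ ψ (x t) (b t) = (ρ t)⁻¹ • g t := fun t => by
        rw [hbdef]; exact (fderiv ℝ ψ (x t)).map_smul _ _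
      have hnorm : ∀ t : ℝ, ‖fderiv ℝ ψ (x t) (b t)‖ = 1 := fun t => by
        rw [hfb t, norm_smul, norm_inv, Real.norm_eq_abs, abs_of_pos (hρpos t),
          inv_mul_cancel₀ (ne_of_gt (hρpos t))]
      have hb0 : fderiv ℝ ψ 0 (b 0) = u := by
        rw [← hx0, hfb 0, hρ0, hg0]; norm_num
      have hxd : HasDerivAt x z 0 := by
        simpa [hφ0] using hφ'.smul_const z
      have hβd : HasDerivAt β c 0 := by
        simpa [hβdef] using (hφ'.smul_const c).const_add a
      have hgd : HasDerivAt g (D2 z a + fderiv ℝ ψ 0 c) 0 := by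
        have := keyDeriv_aux ψ hψ hx0 hxd hβd
        rwa [hβ0] at this
      set g' := D2 z a + fderiv ℝ ψ 0 c with hg'def
      have hg'eq : g' = w₁ + (Submodule.orthogonalProjectionOnto Tᗮ (D2 a z) :
          EuclideanSpace ℝ (Fin n)) := by
        rw [hg'def, show fderiv ℝ ψ 0 c = _ from hc, hsymm z a]
        nth_rewrite 1 [← hdec (D2 a z)]
        abel
      have hg'u : ⟪g', u⟫ = 0 := by
        rw [hg'eq, inner_add_left, hw₁u, hperp, add_zero]
      have hsd : HasDerivAt (fun t => ⟪g t, g t⟫) (0 : ℝ) 0 := by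
        have h := hgd.inner (𝕜 := ℝ) hgd
        rw [hg0] at h
        have h2 : ⟪u, g'⟫ + ⟪g', u⟫ = 0 := by
          have h3 := real_inner_comm u g'
          linarith [hg'u]
        rwa [h2] at h
      have hs0 : ⟪g 0, g 0⟫ = (1:ℝ) := by
        rw [hg0, real_inner_self_eq_norm_sq, hu]; norm_num
      have hρd : HasDerivAt ρ 0 0 := by
        have h := (Real.hasDerivAt_sqrt (by rw [hs0]; norm_num)).comp 0 hsd
        have hρeq : ρ = fun t => Real.sqrt ⟪g t, g t⟫ := funext fun t => by
          rw [hρdef, real_inner_self_eq_norm_sq, Real.sqrt_sq (norm_nonneg _)]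
        rw [hρeq]
        simpa [Function.comp_def] using h
      have hρinv : HasDerivAt (fun t => (ρ t)⁻¹) 0 0 := by
        have := hρd.inv (ne_of_gt (hρpos 0))
        simp at this; exact this
      have hfd : HasDerivAt (fun t => (ρ t)⁻¹ • g t) g' 0 := by
        have h := hρinv.smul hgd
        rw [hρ0, hg0] at h
        simp at h; exact h
      refine ⟨x, b, hxs, hbs, hx0, hnorm, hb0, ?_⟩
      have hfun : (fun t : ℝ => fderiv ℝ ψ (x t) (b t)) = fun t => (ρ t)⁻¹ • g t :=
        funext hfb
      rw [hfun, hfd.deriv, hwdef, hg'eq]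
  · -- directness
    rintro w hwT ⟨z, hz⟩
    replace hwT : w ∈ T := hwT
    have hw2 : w ∈ Tᗮ := by rw [hz]; exact SetLike.coe_mem _
    exact inner_self_eq_zero.mp (Submodule.inner_right_of_mem_orthogonal hwT hw2)
end

section
/- Let M ⊂ ℝ^n be a smooth embedded m-dimensional submanifold, (p,u) a point of its unit sphere bundle SM, and θ : SM → S^{n-1} the tautological map. Then d_{(p,u)}θ has full rank min(2m-1, n-1) if and only if the linear map v ↦ h_p(u,v) from T_pM to (T_pM)^⊥ has rank min(m, n-m). -/
open Submodule
open scoped RealInnerProductSpace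

namespace TautAux

variable {m n : ℕ} {ψ : EuclideanSpace ℝ (Fin m) → EuclideanSpace ℝ (Fin n)}

/-- Derivative of `t ↦ dψ_{x t}(b t)` at `0` when `x 0 = 0`. -/
lemma curve_hasDerivAt (hψ : ContDiff ℝ (⊤ : ℕ∞) ψ)
    {x b : ℝ → EuclideanSpace ℝ (Fin m)} {v c : EuclideanSpace ℝ (Fin m)}
    (hx : HasDerivAt x v 0) (hb : HasDerivAt b c 0) (hx0 : x 0 = 0) :
    HasDerivAt (fun t => fderiv ℝ ψ (x t) (b t))
      (fderiv ℝ (fderiv ℝ ψ) 0 v (b 0) + fderiv ℝ ψ 0 c) 0 := by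
  have hdψ : ContDiff ℝ (⊤ : ℕ∞) (fderiv ℝ ψ) := hψ.fderiv_right (by simp)
  have hf : HasFDerivAt (fderiv ℝ ψ) (fderiv ℝ (fderiv ℝ ψ) (x 0)) (x 0) :=
    ((hdψ.differentiable (by simp)) (x 0)).hasFDerivAt
  rw [hx0] at hf
  have h1 : HasDerivAt (fun t => fderiv ℝ ψ (x t)) (fderiv ℝ (fderiv ℝ ψ) 0 v) 0 :=
    hf.comp_hasDerivAt_of_eq 0 hx hx0.symm
  have := h1.clm_apply hb
  rwa [hx0] at this

/-- Realization of an admissible infinitesimal variation by an actual curve in the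
sphere bundle, after scaling by some positive `δ`. -/
lemma construction (hψ : ContDiff ℝ (⊤ : ℕ∞) ψ)
    {u : EuclideanSpace ℝ (Fin n)} (hu : ‖u‖ = 1)
    {a : EuclideanSpace ℝ (Fin m)} (ha : fderiv ℝ ψ 0 a = u)
    (v c : EuclideanSpace ℝ (Fin m))
    (hperp : ⟪u, fderiv ℝ (fderiv ℝ ψ) 0 v a + fderiv ℝ ψ 0 c⟫ = 0) :
    ∃ δ : ℝ, 0 < δ ∧ ∃ x b : ℝ → EuclideanSpace ℝ (Fin m),
      ContDiff ℝ (⊤ : ℕ∞) x ∧ ContDiff ℝ (⊤ : ℕ∞) b ∧ x 0 = 0 ∧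
      (∀ t : ℝ, ‖fderiv ℝ ψ (x t) (b t)‖ = 1) ∧ fderiv ℝ ψ 0 (b 0) = u ∧
      δ • (fderiv ℝ (fderiv ℝ ψ) 0 v a + fderiv ℝ ψ 0 c)
        = deriv (fun t : ℝ => fderiv ℝ ψ (x t) (b t)) 0 := by
  set w := fderiv ℝ (fderiv ℝ ψ) 0 v a + fderiv ℝ ψ 0 c with hw
  set F₀ : ℝ → EuclideanSpace ℝ (Fin n) :=
    fun s => fderiv ℝ ψ (s • v) (a + s • c) with hF₀
  have hF₀smooth : ContDiff ℝ (⊤ : ℕ∞) F₀ := by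
    exact ((hψ.fderiv_right (by simp)).comp (contDiff_id.smul contDiff_const)).clm_apply
      (contDiff_const.add (contDiff_id.smul contDiff_const))
  have hF₀0 : F₀ 0 = u := by simp [hF₀, ha]
  have hune : u ≠ 0 := by intro h; rw [h] at hu; simp at hu
  have hev : ∀ᶠ s in nhds (0 : ℝ), F₀ s ≠ 0 :=
    hF₀smooth.continuous.continuousAt.eventually_ne (by rw [hF₀0]; exact hune)
  obtain ⟨ε, εpos, hε⟩ := Metric.eventually_nhds_iff.mp hev
  set δ := ε / 2 with hδ
  have δpos : 0 < δ := by positivity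
  set ρ : ℝ → ℝ := fun t => δ * Real.sin t with hρ
  have hρbound : ∀ t, dist (ρ t) 0 < ε := by
    intro t
    rw [Real.dist_eq, sub_zero, hρ, abs_mul, abs_of_pos δpos]
    calc δ * |Real.sin t| ≤ δ * 1 := by
          exact mul_le_mul_of_nonneg_left
            (abs_le.2 ⟨Real.neg_one_le_sin t, Real.sin_le_one t⟩) δpos.le
      _ < ε := by rw [mul_one, hδ]; linarith
  have hFne : ∀ t, F₀ (ρ t) ≠ 0 := fun t => hε (hρbound t)
  set x : ℝ → EuclideanSpace ℝ (Fin m) := fun t => ρ t • v with hx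
  set b : ℝ → EuclideanSpace ℝ (Fin m) :=
    fun t => (‖F₀ (ρ t)‖)⁻¹ • (a + ρ t • c) with hb
  have hρ0 : ρ 0 = 0 := by simp [hρ]
  have hρsmooth : ContDiff ℝ (⊤ : ℕ∞) ρ := contDiff_const.mul Real.contDiff_sin
  have hxsmooth : ContDiff ℝ (⊤ : ℕ∞) x := hρsmooth.smul contDiff_const
  have hNpos : ∀ t, (0:ℝ) < ‖F₀ (ρ t)‖ := fun t => norm_pos_iff.2 (hFne t)
  have hNsmooth : ContDiff ℝ (⊤ : ℕ∞) (fun t => ‖F₀ (ρ t)‖) :=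
    ContDiff.norm ℝ (hF₀smooth.comp hρsmooth) hFne
  have hbsmooth : ContDiff ℝ (⊤ : ℕ∞) b :=
    (hNsmooth.inv fun t => (hNpos t).ne').smul
      (contDiff_const.add (hρsmooth.smul contDiff_const))
  have hx0 : x 0 = 0 := by simp [hx, hρ0]
  have hkey : ∀ t, fderiv ℝ ψ (x t) (b t) = (‖F₀ (ρ t)‖)⁻¹ • F₀ (ρ t) := by
    intro t
    rw [hb]
    exact (fderiv ℝ ψ (x t)).map_smul _ _
  have hnorm1 : ∀ t : ℝ, ‖fderiv ℝ ψ (x t) (b t)‖ = 1 := by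
    intro t
    rw [hkey t, norm_smul, norm_inv, norm_norm]
    exact inv_mul_cancel₀ (hNpos t).ne'
  have hb0 : b 0 = a := by
    rw [hb]; simp [hρ0, hF₀0, hu]
  have hfb0 : fderiv ℝ ψ 0 (b 0) = u := by rw [hb0, ha]
  have hvd : HasDerivAt (fun s : ℝ => s • v) v 0 := by
    simpa using (hasDerivAt_id (0:ℝ)).smul_const v
  have hcd : HasDerivAt (fun s : ℝ => a + s • c) c 0 := by
    simpa using ((hasDerivAt_id (0:ℝ)).smul_const c).const_add a
  have hF₀deriv : HasDerivAt F₀ w 0 := by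
    have := curve_hasDerivAt hψ hvd hcd (by simp)
    simp only [zero_smul, add_zero] at this
    exact this
  have hq : HasDerivAt (fun s => ⟪F₀ s, F₀ s⟫) 0 0 := by
    have := HasDerivAt.inner ℝ hF₀deriv hF₀deriv
    rw [hF₀0] at this
    simpa [real_inner_comm u w, hperp, ← hw] using this
  have hsqne : ⟪F₀ 0, F₀ 0⟫ ≠ 0 := by
    rw [hF₀0, real_inner_self_eq_norm_mul_norm, hu]; norm_num
  have hsq : HasDerivAt (fun s => Real.sqrt ⟪F₀ s, F₀ s⟫) 0 0 := by
    have := (Real.hasDerivAt_sqrt hsqne).comp 0 hq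
    rw [mul_zero] at this; exact this
  have hsqeq : (fun s => Real.sqrt ⟪F₀ s, F₀ s⟫) = fun s => ‖F₀ s‖ := by
    funext s
    rw [real_inner_self_eq_norm_mul_norm, Real.sqrt_mul_self (norm_nonneg _)]
  rw [hsqeq] at hsq
  have hn0 : ‖F₀ 0‖ ≠ 0 := by rw [hF₀0, hu]; norm_num
  have hinvd : HasDerivAt (fun s => (‖F₀ s‖)⁻¹) 0 0 := by
    have := hsq.inv hn0
    rw [neg_zero, zero_div] at this; exact this
  have hG : HasDerivAt (fun s => (‖F₀ s‖)⁻¹ • F₀ s) w 0 := by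
    have := hinvd.smul hF₀deriv
    simp [hF₀0, hu] at this; exact this
  have hρd : HasDerivAt ρ δ 0 := by
    simpa using (Real.hasDerivAt_sin 0).const_mul δ
  have hθ : HasDerivAt (fun t => fderiv ℝ ψ (x t) (b t)) (δ • w) 0 := by
    have hcomp : HasDerivAt ((fun s => (‖F₀ s‖)⁻¹ • F₀ s) ∘ ρ) (δ • w) 0 := by
      rw [← hρ0] at hG
      exact hG.scomp 0 hρd
    have : ((fun s => (‖F₀ s‖)⁻¹ • F₀ s) ∘ ρ) = fun t => fderiv ℝ ψ (x t) (b t) := by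
      funext t; rw [hkey t]; rfl
    rwa [this] at hcomp
  exact ⟨δ, δpos, x, b, hxsmooth, hbsmooth, hx0, hnorm1, hfb0, hθ.deriv.symm⟩

end TautAux

/-- Let `M ⊂ ℝ^n` be a smooth embedded `m`-dimensional submanifold, presented locally by a
smooth immersion `ψ : ℝ^m → ℝ^n` with `ψ 0 = p` and injective differential `dψ₀`, and let
`(p, u)` be a point of its unit sphere bundle `SM`, `u = dψ₀ a`.  The differential at
`(p,u)` of the tautological map `θ : SM → S^{n-1}` — whose image is the set of velocities
at `0` of the `S^{n-1}`-components of smooth curves in `SM` through `(p,u)` — has full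
rank `min (2m-1) (n-1)` if and only if the linear map `v ↦ h_p(u,v)` from `T_pM` to
`(T_pM)^⊥` (given in the parametrization by `z ↦ P^⊥(D²ψ₀(a,z))`) has rank `min m (n-m)`. -/
theorem tautological_full_rank_iff_second_fundamental_full_rank
    {m n : ℕ} (hm : 1 ≤ m) (hmn : m ≤ n)
    (ψ : EuclideanSpace ℝ (Fin m) → EuclideanSpace ℝ (Fin n))
    (hψ : ContDiff ℝ (⊤ : ℕ∞) ψ)
    (hinj : Function.Injective (fderiv ℝ ψ 0))
    (u : EuclideanSpace ℝ (Fin n)) (hu : ‖u‖ = 1)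
    (a : EuclideanSpace ℝ (Fin m)) (ha : fderiv ℝ ψ 0 a = u) :
    Module.finrank ℝ (span ℝ
        {w : EuclideanSpace ℝ (Fin n) |
          ∃ x b : ℝ → EuclideanSpace ℝ (Fin m), ContDiff ℝ (⊤ : ℕ∞) x ∧ ContDiff ℝ (⊤ : ℕ∞) b ∧
            x 0 = 0 ∧ (∀ t : ℝ, ‖fderiv ℝ ψ (x t) (b t)‖ = 1) ∧
            fderiv ℝ ψ 0 (b 0) = u ∧
            w = deriv (fun t : ℝ => fderiv ℝ ψ (x t) (b t)) 0})
        = min (2 * m - 1) (n - 1)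
      ↔ Module.finrank ℝ (span ℝ
          {w : EuclideanSpace ℝ (Fin n) |
            ∃ z : EuclideanSpace ℝ (Fin m),
              w = (orthogonalProjection (LinearMap.range (fderiv ℝ ψ 0 : EuclideanSpace ℝ (Fin m) →ₗ[ℝ] EuclideanSpace ℝ (Fin n)))ᗮ
                (iteratedFDeriv ℝ 2 ψ 0 ![a, z]) : EuclideanSpace ℝ (Fin n))})
          = min m (n - m) := by
  classical
  have hsym : ∀ p q : EuclideanSpace ℝ (Fin m),
      fderiv ℝ (fderiv ℝ ψ) 0 p q = fderiv ℝ (fderiv ℝ ψ) 0 q p := by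
    intro p q
    exact (hψ.contDiffAt.isSymmSndFDerivAt (by rw [minSmoothness_of_isRCLikeNormedField]; exact WithTop.coe_le_coe.mpr (le_top : (2 : ℕ∞) ≤ ⊤))) p q
  set T : Submodule ℝ (EuclideanSpace ℝ (Fin n)) :=
    LinearMap.range (fderiv ℝ ψ 0 : EuclideanSpace ℝ (Fin m) →ₗ[ℝ] EuclideanSpace ℝ (Fin n)) with hT
  set A : EuclideanSpace ℝ (Fin m) →L[ℝ] EuclideanSpace ℝ (Fin n) :=
    (fderiv ℝ (fderiv ℝ ψ) 0).flip a with hA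
  set Pc : EuclideanSpace ℝ (Fin n) →L[ℝ] EuclideanSpace ℝ (Fin n) :=
    Tᗮ.subtypeL.comp (orthogonalProjection Tᗮ) with hPc
  set Hs : Submodule ℝ (EuclideanSpace ℝ (Fin n)) :=
    LinearMap.range (Pc.comp A : EuclideanSpace ℝ (Fin m) →ₗ[ℝ] EuclideanSpace ℝ (Fin n)) with hHsdef
  set R : Submodule ℝ (EuclideanSpace ℝ (Fin n)) :=
    LinearMap.range (A : EuclideanSpace ℝ (Fin m) →ₗ[ℝ] EuclideanSpace ℝ (Fin n)) ⊔ T with hR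
  set X : Submodule ℝ (EuclideanSpace ℝ (Fin n)) := R ⊓ (ℝ ∙ u)ᗮ with hXdef
  have hAapp : ∀ z, A z = fderiv ℝ (fderiv ℝ ψ) 0 z a := fun z => rfl
  have hPcapp : ∀ y, Pc y = (orthogonalProjection Tᗮ y :
      EuclideanSpace ℝ (Fin n)) := fun y => rfl
  -- Step 1: the span of the velocity set is `X`.
  have hsetW : span ℝ
        {w : EuclideanSpace ℝ (Fin n) |
          ∃ x b : ℝ → EuclideanSpace ℝ (Fin m), ContDiff ℝ (⊤ : ℕ∞) x ∧ ContDiff ℝ (⊤ : ℕ∞) b ∧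
            x 0 = 0 ∧ (∀ t : ℝ, ‖fderiv ℝ ψ (x t) (b t)‖ = 1) ∧
            fderiv ℝ ψ 0 (b 0) = u ∧
            w = deriv (fun t : ℝ => fderiv ℝ ψ (x t) (b t)) 0} = X := by
    apply le_antisymm
    · apply span_le.2
      rintro w ⟨x, b, hx, hb, hx0, hnorm, hb0, rfl⟩
      have hxd : HasDerivAt x (deriv x 0) 0 := ((hx.differentiable (by simp)) 0).hasDerivAt
      have hbd : HasDerivAt b (deriv b 0) 0 := ((hb.differentiable (by simp)) 0).hasDerivAt
      have hder := TautAux.curve_hasDerivAt hψ hxd hbd hx0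
      have hb0a : b 0 = a := hinj (by rw [hb0, ha])
      have hval : deriv (fun t : ℝ => fderiv ℝ ψ (x t) (b t)) 0
          = fderiv ℝ (fderiv ℝ ψ) 0 (deriv x 0) (b 0) + fderiv ℝ ψ 0 (deriv b 0) :=
        hder.deriv
      rw [SetLike.mem_coe, hval]
      refine Submodule.mem_inf.2 ⟨?_, ?_⟩
      · refine Submodule.mem_sup.2
          ⟨A (deriv x 0), LinearMap.mem_range_self _ _,
            fderiv ℝ ψ 0 (deriv b 0), LinearMap.mem_range_self _ _, ?_⟩
        rw [hAapp, hb0a]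
      · rw [Submodule.mem_orthogonal_singleton_iff_inner_right, hb0a]
        have hone : (fun t : ℝ => ⟪fderiv ℝ ψ (x t) (b t), fderiv ℝ ψ (x t) (b t)⟫)
            = fun _ => (1 : ℝ) := by
          funext t
          rw [real_inner_self_eq_norm_mul_norm, hnorm t, mul_one]
        have hd2 := HasDerivAt.inner ℝ hder hder
        rw [hone] at hd2
        have hzero := hd2.unique (hasDerivAt_const 0 1)
        rw [hx0, hb0a, ha] at hzero
        rw [real_inner_comm] at hzero
        linarith [hzero, real_inner_comm u
          (fderiv ℝ (fderiv ℝ ψ) 0 (deriv x 0) a + fderiv ℝ ψ 0 (deriv b 0))]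
    · intro w hw
      obtain ⟨hwR, hwperp⟩ := Submodule.mem_inf.1 hw
      obtain ⟨y, hy, z, hz, rfl⟩ := Submodule.mem_sup.1 hwR
      obtain ⟨v, rfl⟩ := hy
      obtain ⟨cc, rfl⟩ := hz
      rw [Submodule.mem_orthogonal_singleton_iff_inner_right] at hwperp
      have hperp' : ⟪u, fderiv ℝ (fderiv ℝ ψ) 0 v a + fderiv ℝ ψ 0 cc⟫ = 0 := by
        rw [← hAapp v]; exact hwperp
      obtain ⟨δ, δpos, x, b, hxs, hbs, hx0, hnorm, hb0, hder⟩ :=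
        TautAux.construction hψ hu ha v cc hperp'
      have hmem : δ • (A v + fderiv ℝ ψ 0 cc) ∈
          {w : EuclideanSpace ℝ (Fin n) |
            ∃ x b : ℝ → EuclideanSpace ℝ (Fin m), ContDiff ℝ (⊤ : ℕ∞) x ∧ ContDiff ℝ (⊤ : ℕ∞) b ∧
              x 0 = 0 ∧ (∀ t : ℝ, ‖fderiv ℝ ψ (x t) (b t)‖ = 1) ∧
              fderiv ℝ ψ 0 (b 0) = u ∧
              w = deriv (fun t : ℝ => fderiv ℝ ψ (x t) (b t)) 0} := by
        refine ⟨x, b, hxs, hbs, hx0, hnorm, hb0, ?_⟩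
        rw [hAapp v]
        exact hder
      have hsm := Submodule.smul_mem _ δ⁻¹ (subset_span hmem)
      rwa [smul_smul, inv_mul_cancel₀ δpos.ne', one_smul] at hsm
  -- Step 2: the span of the second-fundamental-form set is `Hs`.
  have hsetH : span ℝ
        {w : EuclideanSpace ℝ (Fin n) |
          ∃ z : EuclideanSpace ℝ (Fin m),
            w = (orthogonalProjection Tᗮ
              (iteratedFDeriv ℝ 2 ψ 0 ![a, z]) : EuclideanSpace ℝ (Fin n))} = Hs := by
    have hseteq : {w : EuclideanSpace ℝ (Fin n) |
          ∃ z : EuclideanSpace ℝ (Fin m),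
            w = (orthogonalProjection Tᗮ
              (iteratedFDeriv ℝ 2 ψ 0 ![a, z]) : EuclideanSpace ℝ (Fin n))}
        = (Hs : Set (EuclideanSpace ℝ (Fin n))) := by
      ext w
      simp only [Set.mem_setOf_eq, SetLike.mem_coe]
      constructor
      · rintro ⟨z, rfl⟩
        refine ⟨z, ?_⟩
        rw [ContinuousLinearMap.coe_coe, ContinuousLinearMap.comp_apply, hPcapp, hAapp,
          iteratedFDeriv_two_apply]
        simp only [Matrix.cons_val_zero, Matrix.cons_val_one, Matrix.head_cons]
        rw [hsym z a]
      · rintro ⟨z, rfl⟩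
        refine ⟨z, ?_⟩
        rw [ContinuousLinearMap.coe_coe, ContinuousLinearMap.comp_apply, hPcapp, hAapp,
          iteratedFDeriv_two_apply]
        simp only [Matrix.cons_val_zero, Matrix.cons_val_one, Matrix.head_cons]
        rw [hsym z a]
    rw [hseteq, Submodule.span_eq]
  rw [hsetW, hsetH]
  -- Step 3: rank computations.
  have hu' : u ∈ T := ⟨a, ha⟩
  have huR : u ∈ R := Submodule.mem_sup_right hu'
  -- finrank X + 1 = finrank R
  have hXR : Module.finrank ℝ X + 1 = Module.finrank ℝ R := by
    set φ : R →ₗ[ℝ] ℝ := ((innerSL ℝ u).toLinearMap).domRestrict R with hφ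
    have hrange : LinearMap.range φ = ⊤ := by
      rw [LinearMap.range_eq_top]
      intro r
      refine ⟨r • ⟨u, huR⟩, ?_⟩
      simp only [hφ, LinearMap.domRestrict_apply, Submodule.coe_smul_of_tower,
        ContinuousLinearMap.coe_coe, innerSL_apply_apply]
      rw [real_inner_smul_right, real_inner_self_eq_norm_mul_norm, hu]
      ring
    have hker : X = Submodule.map R.subtype (LinearMap.ker φ) := by
      ext w
      simp only [hXdef, Submodule.mem_inf, Submodule.mem_map, LinearMap.mem_ker,
        hφ, LinearMap.domRestrict_apply, ContinuousLinearMap.coe_coe, innerSL_apply_apply,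
        Submodule.coe_subtype, Submodule.mem_orthogonal_singleton_iff_inner_right]
      constructor
      · rintro ⟨hwR', hwp⟩
        exact ⟨⟨w, hwR'⟩, hwp, rfl⟩
      · rintro ⟨⟨y, hy⟩, h0, rfl⟩
        exact ⟨hy, h0⟩
    rw [hker, Submodule.finrank_map_subtype_eq]
    have hrn := LinearMap.finrank_range_add_finrank_ker φ
    rw [hrange, finrank_top, Module.finrank_self] at hrn
    omega
  -- decomposition of R
  have hdecomp : R = T ⊔ Hs := by
    apply le_antisymm
    · refine sup_le ?_ le_sup_left
      rintro w ⟨z, rfl⟩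
      have hdec : A z = (orthogonalProjection T (A z) : EuclideanSpace ℝ (Fin n))
          + Pc (A z) :=
        (T.starProjection_add_starProjection_orthogonal (A z)).symm
      rw [ContinuousLinearMap.coe_coe, hdec]
      exact Submodule.add_mem _
        (Submodule.mem_sup_left (SetLike.coe_mem _))
        (Submodule.mem_sup_right ⟨z, rfl⟩)
    · refine sup_le le_sup_right ?_
      rintro w ⟨z, rfl⟩
      have hdec : (Pc.comp A) z = A z
          - (orthogonalProjection T (A z) : EuclideanSpace ℝ (Fin n)) := by
        have h : (orthogonalProjection T (A z) : EuclideanSpace ℝ (Fin n))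
            + (orthogonalProjection Tᗮ (A z) : EuclideanSpace ℝ (Fin n)) = A z :=
          T.starProjection_add_starProjection_orthogonal (A z)
        rw [ContinuousLinearMap.comp_apply, hPcapp]
        linear_combination (norm := module) h
      rw [ContinuousLinearMap.coe_coe, hdec]
      exact Submodule.sub_mem _
        (Submodule.mem_sup_left ⟨z, rfl⟩)
        (Submodule.mem_sup_right (SetLike.coe_mem _))
  have hHsT : Hs ≤ Tᗮ := by
    rintro w ⟨z, rfl⟩
    exact SetLike.coe_mem (orthogonalProjection Tᗮ (A z))
  have hinfbot : T ⊓ Hs = ⊥ := ((Submodule.orthogonal_disjoint T).mono_right hHsT).eq_bot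
  have hfinT : Module.finrank ℝ T = m := by
    have : Module.finrank ℝ (LinearMap.range ((fderiv ℝ ψ 0
        : EuclideanSpace ℝ (Fin m) →L[ℝ] EuclideanSpace ℝ (Fin n))
        : EuclideanSpace ℝ (Fin m) →ₗ[ℝ] EuclideanSpace ℝ (Fin n)))
        = Module.finrank ℝ (EuclideanSpace ℝ (Fin m)) :=
      LinearMap.finrank_range_of_inj hinj
    rw [finrank_euclideanSpace_fin] at this
    rw [hT]
    exact this
  have hfinF : Module.finrank ℝ (EuclideanSpace ℝ (Fin n)) = n :=
    finrank_euclideanSpace_fin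
  have hfinTperp : Module.finrank ℝ Tᗮ = n - m := by
    have := Submodule.finrank_add_finrank_orthogonal T
    rw [hfinT, hfinF] at this
    omega
  have hRfr : Module.finrank ℝ R = m + Module.finrank ℝ Hs := by
    have hsum := Submodule.finrank_sup_add_finrank_inf_eq T Hs
    rw [hinfbot, finrank_bot, hfinT] at hsum
    rw [hdecomp]
    omega
  have hHle1 : Module.finrank ℝ Hs ≤ m := by
    have : Module.finrank ℝ (LinearMap.range (((Pc.comp A)
        : EuclideanSpace ℝ (Fin m) →L[ℝ] EuclideanSpace ℝ (Fin n))
        : EuclideanSpace ℝ (Fin m) →ₗ[ℝ] EuclideanSpace ℝ (Fin n)))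
        ≤ Module.finrank ℝ (EuclideanSpace ℝ (Fin m)) :=
      LinearMap.finrank_range_le _
    rw [finrank_euclideanSpace_fin] at this
    exact this
  have hHle2 : Module.finrank ℝ Hs ≤ n - m := by
    rw [← hfinTperp]
    exact Submodule.finrank_mono hHsT
  omega
end
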